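/- arXiv:1412.2782 — 11 statements merged into one kernel-verified Lean document; each statement's English description precedes it below -/
import Mathlib

section
/- Let (A,σ) be a difference ring whose constants K = const(A,σ) form a field, and let f₁,…,f_d ∈ A. Then the solution set V = {(c₁,…,c_d,g) ∈ K^d × A | σ(g) − g = c₁f₁ + ⋯ + c_d f_d} is a K-vector space of dimension at most d+1. -/
open scoped BigOperators

set_option maxHeartbeats 1600000
set_option synthInstance.maxHeartbeats 400000

/-- The solution set of the parameterized telescoping equation in a difference
ring whose constants form the field `K` is a `K`-vector space of dimension at
most `d + 1`. -/
theorem parameterized_telescoping_solution_space {K A : Type*} [Field K] [CommRing A]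
    [Algebra K A] (σ : A ≃+* A)
    (hK : Set.range (algebraMap K A) = {c : A | σ c = c})
    (d : ℕ) (f : Fin d → A) :
    ∃ V : Submodule K ((Fin d → K) × A),
      (V : Set ((Fin d → K) × A)) =
        {p : (Fin d → K) × A | σ p.2 - p.2 = ∑ j, algebraMap K A (p.1 j) * f j} ∧
      Module.rank K V ≤ d + 1 := by
  have hfix : ∀ k : K, σ (algebraMap K A k) = algebraMap K A k := by
    intro k
    have : algebraMap K A k ∈ Set.range (algebraMap K A) := ⟨k, rfl⟩
    rw [hK] at this
    exact this
  -- σ as a K-linear map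
  let σL : A →ₗ[K] A :=
    { toFun := σ
      map_add' := map_add σ
      map_smul' := by
        intro k a
        simp [Algebra.smul_def, hfix k] }
  -- the right-hand side as a linear map
  let G : (Fin d → K) →ₗ[K] A :=
    { toFun := fun c => ∑ j, algebraMap K A (c j) * f j
      map_add' := by
        intro x y
        simp [map_add, add_mul, Finset.sum_add_distrib]
      map_smul' := by
        intro k x
        simp [Algebra.smul_def, Finset.mul_sum, mul_assoc] }
  let F : (Fin d → K) × A →ₗ[K] A :=
    (σL - LinearMap.id).comp (LinearMap.snd K (Fin d → K) A) -
      G.comp (LinearMap.fst K (Fin d → K) A)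
  refine ⟨LinearMap.ker F, ?_, ?_⟩
  · ext p
    simp only [SetLike.mem_coe, LinearMap.mem_ker, Set.mem_setOf_eq]
    constructor
    · intro h
      have := sub_eq_zero.mp h
      simpa [F, σL, G, LinearMap.sub_apply] using this
    · intro h
      have : ((σL - LinearMap.id).comp (LinearMap.snd K (Fin d → K) A)) p =
          (G.comp (LinearMap.fst K (Fin d → K) A)) p := by
        simpa [σL, G, LinearMap.sub_apply] using h
      simp [F, this]
  · set V := LinearMap.ker F with hV
    let π : V →ₗ[K] (Fin d → K) × A :=
      (LinearMap.inl K (Fin d → K) A).comp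
        ((LinearMap.fst K (Fin d → K) A).comp V.subtype)
    haveI : HasRankNullity K := DivisionRing.hasRankNullity
    have hrank := LinearMap.rank_range_add_rank_ker π
    -- the range of π has rank at most d
    have h1 : Module.rank K (LinearMap.range π) ≤ d := by
      have hsub : LinearMap.range π ≤ Submodule.span K
          (Set.range (fun i : Fin d => ((Pi.single i (1 : K) : Fin d → K), (0 : A)))) := by
        rintro _ ⟨x, rfl⟩
        have : π x = ∑ i, ((x : (Fin d → K) × A).1 i) •
            ((Pi.single i (1 : K) : Fin d → K), (0 : A)) := by
          ext j
          · simp [π, Prod.fst_sum, Finset.sum_apply, Pi.single_apply]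
          · simp [π, Prod.snd_sum]
        rw [this]
        exact Submodule.sum_mem _ fun i _ =>
          Submodule.smul_mem _ _ (Submodule.subset_span ⟨i, rfl⟩)
      calc Module.rank K (LinearMap.range π)
          ≤ Module.rank K (Submodule.span K
              (Set.range (fun i : Fin d => ((Pi.single i (1 : K) : Fin d → K), (0 : A))))) :=
            Submodule.rank_mono hsub
        _ ≤ _ := rank_span_le _
        _ ≤ d := by
            have := Cardinal.mk_range_le_lift
              (f := fun i : Fin d => ((Pi.single i (1 : K) : Fin d → K), (0 : A)))
            simpa using this
    -- the kernel of π has rank at most 1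
    have h2 : Module.rank K (LinearMap.ker π) ≤ 1 := by
      set e : (Fin d → K) × A := ((0 : Fin d → K), (1 : A)) with he
      have hmem : ∀ x : LinearMap.ker π, ((x : V) : (Fin d → K) × A) ∈
          Submodule.span K ({e} : Set ((Fin d → K) × A)) := by
        rintro ⟨x, hx0⟩
        have hc : ((x : (Fin d → K) × A).1 : Fin d → K) = 0 := by
          have : π x = 0 := hx0
          have := congrArg Prod.fst this
          simpa [π] using this
        have hg : σ ((x : (Fin d → K) × A).2) - (x : (Fin d → K) × A).2 =
            ∑ j, algebraMap K A ((x : (Fin d → K) × A).1 j) * f j := by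
          have hxV : F ((x : (Fin d → K) × A)) = 0 := x.2
          have := sub_eq_zero.mp hxV
          simpa [F, σL, G, LinearMap.sub_apply] using this
        rw [hc] at hg
        simp only [Pi.zero_apply, map_zero, zero_mul, Finset.sum_const_zero] at hg
        have hfixg : σ ((x : (Fin d → K) × A).2) = (x : (Fin d → K) × A).2 := by
          linear_combination hg
        have : ((x : (Fin d → K) × A).2) ∈ Set.range (algebraMap K A) := by
          rw [hK]; exact hfixg
        obtain ⟨k, hk⟩ := this
        rw [Submodule.mem_span_singleton]
        refine ⟨k, ?_⟩
        ext
        · simp [he, hc]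
        · simp [he, ← hk, Algebra.smul_def]
      let Φ : LinearMap.ker π →ₗ[K] Submodule.span K ({e} : Set ((Fin d → K) × A)) :=
        LinearMap.codRestrict _ (V.subtype.comp (LinearMap.ker π).subtype) hmem
      have hΦinj : Function.Injective Φ := by
        intro x y h
        have h2 := Subtype.ext_iff.mp h
        exact Subtype.ext (Subtype.ext h2)
      calc Module.rank K (LinearMap.ker π)
          ≤ Module.rank K (Submodule.span K ({e} : Set ((Fin d → K) × A))) :=
            LinearMap.rank_le_of_injective Φ hΦinj
        _ ≤ 1 := by simpa using rank_span_le (R := K) ({e} : Set ((Fin d → K) × A))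
    calc Module.rank K V = Module.rank K (LinearMap.range π) +
          Module.rank K (LinearMap.ker π) := hrank.symm
      _ ≤ d + 1 := add_le_add h1 h2
end

section
/- Let (F,σ) be a difference field whose constants K form a field, let a ∈ F∖{0} and f₁,…,f_d ∈ F. Then V(a,f,F) = {(c₁,…,c_d,g) ∈ K^d × F | σ(g) − a·g = c₁f₁ + ⋯ + c_d f_d} is a K-vector space of dimension at most d+1. -/
/-!
The solution set is the kernel of the `K`-linear map `(c, g) ↦ σ g - a g - ∑ cⱼ fⱼ`
(`K`-linear because `σ` fixes `K`). By rank–nullity for the projection `(c, g) ↦ c`, its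
dimension is at most `d` plus the dimension of the homogeneous solutions `σ g = a g`.
These form a line: if `g₀ ≠ 0` is one of them, then for any other `g` the quotient `g / g₀`
is fixed by `σ`, hence lies in `K`.
-/

open Module LinearMap

universe u v w

theorem Submodule.rank_le_of_rank_map_le_of_rank_inf_ker_le {K : Type u} {M : Type v}
    {N : Type w} [DivisionRing K] [AddCommGroup M] [Module K M] [AddCommGroup N] [Module K N]
    (φ : M →ₗ[K] N) (V : Submodule K M) {m n : ℕ} (hmap : Module.rank K (V.map φ) ≤ m)
    (hker : Module.rank K ↥(V ⊓ ker φ) ≤ n) : Module.rank K V ≤ m + n := by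
  have nullity := lift_rank_range_add_rank_ker (φ ∘ₗ V.subtype)
  rw [range_comp, range_subtype, ker_comp, (V.equivSubtypeMap _).rank_eq,
    map_comap_subtype] at nullity
  rw [← Cardinal.lift_le.{w}, ← nullity, ← Nat.cast_add, Cardinal.lift_natCast, Nat.cast_add]
  exact add_le_add (Cardinal.lift_le_nat_iff.mpr hmap) (Cardinal.lift_le_nat_iff.mpr hker)

section DifferenceField

variable {K F : Type*} [Field K] [Field F] [Algebra K F]

theorem map_div_eq_self_of_map_eq_mul (σ : F ≃+* F) {a g₀ g : F} (hg₀ : σ g₀ = a * g₀)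
    (hg : σ g = a * g) (hg₀_ne : g₀ ≠ 0) : σ (g / g₀) = g / g₀ := by
  have ha : a ≠ 0 := left_ne_zero_of_mul (hg₀ ▸ (map_ne_zero σ).mpr hg₀_ne)
  rw [map_div₀, hg, hg₀, mul_div_mul_left _ _ ha]

theorem exists_smul_eq_of_map_eq_mul (σ : F ≃+* F)
    (hK : {c : F | σ c = c} ⊆ Set.range (algebraMap K F)) (a : F) :
    ∃ g₀ : F, ∀ g, σ g = a * g → ∃ c : K, c • g₀ = g := by
  by_cases h : ∃ g₀ ≠ 0, σ g₀ = a * g₀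
  · obtain ⟨g₀, hg₀_ne, hg₀⟩ := h
    refine ⟨g₀, fun g hg => ?_⟩
    obtain ⟨c, hc⟩ := hK (map_div_eq_self_of_map_eq_mul σ hg₀ hg hg₀_ne)
    exact ⟨c, by rw [Algebra.smul_def, hc, div_mul_cancel₀ _ hg₀_ne]⟩
  · push Not at h
    refine ⟨0, fun g hg => ⟨0, ?_⟩⟩
    rw [smul_zero]
    by_contra hg_ne
    exact h g (Ne.symm hg_ne) hg

variable {ι : Type*} [Fintype ι]

def fpldeMap (σ : F ≃ₐ[K] F) (a : F) (f : ι → F) : (ι → K) × F →ₗ[K] F :=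
  (σ.toLinearMap - mulLeft K a) ∘ₗ snd K (ι → K) F
    - Fintype.linearCombination K f ∘ₗ fst K (ι → K) F

theorem fpldeMap_apply (σ : F ≃ₐ[K] F) (a : F) (f : ι → F) (p : (ι → K) × F) :
    fpldeMap σ a f p = σ p.2 - a * p.2 - ∑ j, algebraMap K F (p.1 j) * f j := by
  simp [fpldeMap, Fintype.linearCombination_apply, Algebra.smul_def]

theorem rank_ker_fpldeMap_inf_ker_fst_le_one (σ : F ≃ₐ[K] F)
    (hK : {c : F | σ c = c} ⊆ Set.range (algebraMap K F)) (a : F) (f : ι → F) :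
    Module.rank K ↥(ker (fpldeMap σ a f) ⊓ ker (fst K (ι → K) F)) ≤ 1 := by
  obtain ⟨g₀, hg₀⟩ := exists_smul_eq_of_map_eq_mul σ.toRingEquiv hK a
  refine (rank_submodule_le_one_iff' _).mpr ⟨(0, g₀), fun p hp => ?_⟩
  obtain ⟨hp, hp₁⟩ := Submodule.mem_inf.mp hp
  rw [mem_ker, fst_apply] at hp₁
  rw [mem_ker, fpldeMap_apply, hp₁] at hp
  obtain ⟨c, hc⟩ := hg₀ p.2 (by simpa [sub_eq_zero] using hp)
  exact Submodule.mem_span_singleton.mpr ⟨c, Prod.ext (by simp [hp₁]) (by simpa using hc)⟩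

theorem rank_ker_fpldeMap_le (σ : F ≃ₐ[K] F)
    (hK : {c : F | σ c = c} ⊆ Set.range (algebraMap K F)) (a : F) (f : ι → F) :
    Module.rank K (ker (fpldeMap σ a f)) ≤ Fintype.card ι + 1 := by
  refine Submodule.rank_le_of_rank_map_le_of_rank_inf_ker_le (fst K (ι → K) F) _ ?_
    (rank_ker_fpldeMap_inf_ker_fst_le_one σ hK a f)
  exact (Submodule.rank_le _).trans rank_fun'.le

end DifferenceField

theorem fplde_solution_space_general {K F : Type*} [Field K] [Field F] [Algebra K F]
    (σ : F ≃+* F)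
    (hK : Set.range (algebraMap K F) = {c : F | σ c = c})
    (a : F) (d : ℕ) (f : Fin d → F) :
    ∃ V : Submodule K ((Fin d → K) × F),
      (V : Set ((Fin d → K) × F)) =
        {p : (Fin d → K) × F | σ p.2 - a * p.2 = ∑ j, algebraMap K F (p.1 j) * f j} ∧
      Module.rank K V ≤ d + 1 := by
  let τ : F ≃ₐ[K] F := AlgEquiv.ofRingEquiv (f := σ) fun k => hK.le ⟨k, rfl⟩
  refine ⟨ker (fpldeMap τ a f), ?_, ?_⟩
  · ext p
    simp [fpldeMap_apply, τ, sub_eq_zero]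
  · simpa using rank_ker_fpldeMap_le τ hK.ge a f

/-- The solution set of a first-order parameterized linear difference equation
in a difference field whose constants form the field `K` is a `K`-vector space
of dimension at most `d + 1`. -/
theorem fplde_solution_space {K F : Type*} [Field K] [Field F] [Algebra K F]
    (σ : F ≃+* F)
    (hK : Set.range (algebraMap K F) = {c : F | σ c = c})
    (a : F) (ha : a ≠ 0) (d : ℕ) (f : Fin d → F) :
    ∃ V : Submodule K ((Fin d → K) × F),
      (V : Set ((Fin d → K) × F)) =
        {p : (Fin d → K) × F | σ p.2 - a * p.2 = ∑ j, algebraMap K F (p.1 j) * f j} ∧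
      Module.rank K V ≤ d + 1 :=
  fplde_solution_space_general σ hK a d f
end

section
/- Let (F,σ) be a constant-stable difference field (i.e., const(F,σ^k) = const(F,σ) for all k > 0), and let α ∈ const(F,σ) be a primitive λ-th root of unity with λ > 1. Let F[x] be the algebraic ring extension with x^λ = 1 and σ(x) = α·x. Then const(F[x],σ) = const(F,σ); i.e., no element g = Σ_{i=0}^{λ-1} g_i x^i with some g_m ≠ 0 for 0 < m < λ satisfies σ(g) = g. -/
/-- Over a constant-stable difference field `(F, σ)`, the root of unity extension
`F[x]` with `x^λ = 1` and `σ(x) = α·x` (written in coordinates with respect to the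
basis `1, x, …, x^{λ-1}`, on which `σ` acts by `(g_i) ↦ (σ(g_i)·α^i)`) introduces
no new constants: a constant `g = Σ g_i x^i` has `g_m = 0` for all `0 < m < λ`. -/
theorem root_of_unity_extension_constant_stable {F : Type*} [Field F] (σ : F ≃+* F)
    (hstable : ∀ k : ℕ, 0 < k → ∀ a : F, (⇑σ)^[k] a = a → σ a = a)
    (lam : ℕ) (hlam : 1 < lam) (α : F) (hαconst : σ α = α) (hα : α ^ lam = 1)
    (hαmin : ∀ m : ℕ, 0 < m → m < lam → α ^ m ≠ 1)
    (g : Fin lam → F) (hg : ∀ i : Fin lam, σ (g i) * α ^ (i : ℕ) = g i) :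
    ∀ m : Fin lam, 0 < (m : ℕ) → g m = 0 := by
  intro m hm
  by_contra hne
  set a := g m with ha
  have hσa : σ a * α ^ (m : ℕ) = a := hg m
  have hmul : ∀ k : ℕ, ∀ x y : F, (⇑σ)^[k] (x * y) = (⇑σ)^[k] x * (⇑σ)^[k] y := by
    intro k
    induction k with
    | zero => intro x y; simp
    | succ k ih =>
      intro x y
      simp [Function.iterate_succ_apply, map_mul, ih]
  have hαfix : ∀ k : ℕ, (⇑σ)^[k] (α ^ (m : ℕ)) = α ^ (m : ℕ) := by
    intro k
    induction k with
    | zero => rfl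
    | succ k ih => rw [Function.iterate_succ_apply, map_pow, hαconst, ih]
  have key : ∀ k : ℕ, (⇑σ)^[k] a * (α ^ (m : ℕ)) ^ k = a := by
    intro k
    induction k with
    | zero => simp
    | succ k ih =>
      have h1 : (⇑σ)^[k] (σ a) * α ^ (m : ℕ) = (⇑σ)^[k] a := by
        rw [← hαfix k, ← hmul k, hσa]
      calc (⇑σ)^[k + 1] a * (α ^ (m : ℕ)) ^ (k + 1)
          = ((⇑σ)^[k] (σ a) * α ^ (m : ℕ)) * (α ^ (m : ℕ)) ^ k := by
            rw [Function.iterate_succ_apply]; ring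
        _ = (⇑σ)^[k] a * (α ^ (m : ℕ)) ^ k := by rw [h1]
        _ = a := ih
  have hfix : (⇑σ)^[lam] a = a := by
    have := key lam
    rwa [← pow_mul, mul_comm (m : ℕ) lam, pow_mul, hα, one_pow, mul_one] at this
  have hσeq : σ a = a := hstable lam (by omega) a hfix
  have : α ^ (m : ℕ) = 1 := by
    rw [hσeq] at hσa
    have h2 : a * α ^ (m : ℕ) = a * 1 := by rw [mul_one]; exact hσa
    exact mul_left_cancel₀ hne h2
  exact hαmin m hm m.isLt this
end

section
/- Let (A[t],σ) be a difference ring extension of (A,σ) with t transcendental over A, σ(t) = t + β for some β ∈ A, and K = const(A,σ) a field. If there exists g ∈ A[t] with deg(g) ≥ 1 and deg(σ(g) − g) < deg(g) − 1, then there exists γ ∈ A with σ(γ) − γ = β. -/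
open Polynomial

/-- In a difference ring extension `A[t]` of `(A, σ)` with `σ(t) = t + β`, whose
ground constants form a field, the existence of `g ∈ A[t]` with `deg g ≥ 1` and
`deg(σ(g) - g) < deg(g) - 1` forces `β` to be a telescoping image in `A`. -/
theorem degree_drop_gives_telescoper {A : Type*} [CommRing A] [Nontrivial A]
    [Algebra ℚ A] (σ : A ≃+* A)
    (hK : ∀ a : A, σ a = a → a ≠ 0 → ∃ b : A, σ b = b ∧ a * b = 1)
    (β : A) (τ : Polynomial A ≃+* Polynomial A)
    (hτC : ∀ a : A, τ (Polynomial.C a) = Polynomial.C (σ a))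
    (hτX : τ Polynomial.X = Polynomial.X + Polynomial.C β)
    (g : Polynomial A) (hdeg : 1 ≤ g.natDegree)
    (hsmall : (τ g - g).degree + 1 < g.degree) :
    ∃ γ : A, σ γ - γ = β := by
  set n := g.natDegree with hn
  have hg0 : g ≠ 0 := ne_zero_of_natDegree_gt (n := 0) hdeg
  have hdegg : g.degree = (n : WithBot ℕ) := degree_eq_natDegree hg0
  -- τ agrees with the Taylor-shift of the mapped polynomial
  have hτ : τ g = taylor β (g.map (σ : A →+* A)) := by
    have heq : (τ : Polynomial A →+* Polynomial A) =
        eval₂RingHom ((C : A →+* Polynomial A).comp (σ : A →+* A)) (X + C β) := by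
      apply ringHom_ext
      · intro a; simpa using hτC a
      · simpa using hτX
    have h1 : τ g = eval₂ ((C : A →+* Polynomial A).comp (σ : A →+* A)) (X + C β) g := by
      have := congrArg (fun f => f g) heq
      simpa using this
    rw [h1, taylor_apply, comp, eval₂_map]
  set p := g.map (σ : A →+* A) with hp
  have hpc : ∀ k, p.coeff k = σ (g.coeff k) := fun k => coeff_map _ k
  -- the two vanishing coefficients
  have hm : ∀ k : ℕ, n ≤ k + 1 → (τ g - g).coeff k = 0 := by
    intro k hk
    apply coeff_eq_zero_of_degree_lt
    rcases eq_or_ne (τ g - g) 0 with h | h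
    · rw [h, degree_zero]; exact WithBot.bot_lt_coe k
    · rw [degree_eq_natDegree h] at hsmall ⊢
      rw [hdegg] at hsmall
      have h2 : ((τ g - g).natDegree : WithBot ℕ) + 1 = (((τ g - g).natDegree + 1 : ℕ) : WithBot ℕ) := by
        push_cast; ring
      rw [h2] at hsmall
      have h3 : (τ g - g).natDegree + 1 < n := by exact_mod_cast hsmall
      exact_mod_cast (by omega : (τ g - g).natDegree < k)
  have hcn : (τ g - g).coeff n = 0 := hm n (by omega)
  have hcn1 : (τ g - g).coeff (n - 1) = 0 := hm (n - 1) (by omega)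
  -- compute the coefficients of τ g
  have htc : ∀ k, (τ g).coeff k = (hasseDeriv k p).eval β := by
    intro k; rw [hτ, taylor_coeff]
  have hple : p.natDegree ≤ n := natDegree_map_le
  -- coefficient n : hasseDeriv n p = C (p.coeff n)
  have hdn : (hasseDeriv n p).natDegree = 0 := by
    have := natDegree_hasseDeriv_le p n
    omega
  have hτgn : (τ g).coeff n = σ (g.coeff n) := by
    rw [htc, Polynomial.eq_C_of_natDegree_eq_zero hdn, eval_C, hasseDeriv_coeff]
    simp [hpc]
  -- coefficient n-1 : hasseDeriv (n-1) p is linear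
  have hdn1 : (hasseDeriv (n - 1) p).natDegree ≤ 1 := by
    have := natDegree_hasseDeriv_le p (n - 1)
    omega
  have hτgn1 : (τ g).coeff (n - 1) =
      σ (g.coeff (n - 1)) + (n : A) * σ (g.coeff n) * β := by
    rw [htc]
    set q := hasseDeriv (n - 1) p with hq
    have hql : q = C (q.coeff 1) * X + C (q.coeff 0) :=
      eq_X_add_C_of_natDegree_le_one hdn1
    have hq0 : q.coeff 0 = σ (g.coeff (n - 1)) := by
      rw [hq, hasseDeriv_coeff]; simp [hpc]
    have h1 : 1 + (n - 1) = n := by omega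
    have hq1 : q.coeff 1 = (n : A) * σ (g.coeff n) := by
      rw [hq, hasseDeriv_coeff, h1, Nat.choose_symm hdeg, Nat.choose_one_right, hpc]
    rw [hql]
    simp [hq0, hq1]; ring
  -- extract the two relations
  have e1 : σ (g.coeff n) = g.coeff n := by
    rw [coeff_sub, hτgn] at hcn
    linear_combination hcn
  have e2 : σ (g.coeff (n - 1)) - g.coeff (n - 1) = -((n : A) * g.coeff n * β) := by
    rw [coeff_sub, hτgn1, e1] at hcn1
    linear_combination hcn1
  -- invert n * leading coefficient
  set a := (n : A) * g.coeff n with ha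
  have hσa : σ a = a := by rw [ha, map_mul, map_natCast, e1]
  have hglc : g.coeff n ≠ 0 := by
    rw [hn]; exact (Polynomial.leadingCoeff_ne_zero).mpr hg0
  have ha0 : a ≠ 0 := by
    intro h
    have hn0 : (n : ℚ) ≠ 0 := Nat.cast_ne_zero.mpr (by omega)
    have hnA : (n : A) = algebraMap ℚ A (n : ℚ) := by simp
    have hz : g.coeff n = 0 := by
      have h2 := congrArg (fun x => algebraMap ℚ A ((n : ℚ)⁻¹) * x) h
      simp only [mul_zero] at h2
      rw [ha, hnA, ← mul_assoc, ← map_mul, inv_mul_cancel₀ hn0, map_one, one_mul] at h2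
      exact h2
    exact hglc hz
  obtain ⟨b, hσb, hab⟩ := hK a hσa ha0
  refine ⟨-(g.coeff (n - 1)) * b, ?_⟩
  rw [map_mul, map_neg, hσb]
  calc -σ (g.coeff (n - 1)) * b - -(g.coeff (n - 1)) * b
      = -(σ (g.coeff (n - 1)) - g.coeff (n - 1)) * b := by ring
    _ = ((n : A) * g.coeff n * β) * b := by rw [e2]; ring
    _ = β * (a * b) := by rw [ha]; ring
    _ = β := by rw [hab, mul_one]
end

section
/- Let (A[t],σ) be a difference ring extension of (A,σ) with t transcendental over A, σ(t) = t + β for β ∈ A, and const(A,σ) a field. Then const(A[t],σ) = const(A,σ) (i.e., the extension is a ΣΣ-extension) if and only if there is no g ∈ A with σ(g) = g + β. -/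
open Polynomial

/-- The difference ring extension `A[t]` of `(A, σ)` with `σ(t) = t + β` and
ground constants forming a field is a Σ-extension (its constants are exactly the
constants of `A`) if and only if there is no `g ∈ A` with `σ(g) = g + β`. -/
theorem sigma_extension_criterion {A : Type*} [CommRing A] [Nontrivial A]
    [Algebra ℚ A] (σ : A ≃+* A)
    (hK : ∀ a : A, σ a = a → a ≠ 0 → ∃ b : A, σ b = b ∧ a * b = 1)
    (β : A) (τ : Polynomial A ≃+* Polynomial A)
    (hτC : ∀ a : A, τ (Polynomial.C a) = Polynomial.C (σ a))
    (hτX : τ Polynomial.X = Polynomial.X + Polynomial.C β) :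
    (∀ p : Polynomial A, τ p = p → ∃ a : A, σ a = a ∧ p = Polynomial.C a) ↔
      ¬ ∃ g : A, σ g = g + β := by
  -- natural numbers are "regular" in A since A is a ℚ-algebra
  have hnat : ∀ (n : ℕ) (a : A), n ≠ 0 → (n : A) * a = 0 → a = 0 := by
    intro n a hn h
    have h1 : (n : A) = algebraMap ℚ A (n : ℚ) := by
      simp
    have h2 : algebraMap ℚ A ((n : ℚ)⁻¹) * ((n : A) * a) = a := by
      rw [h1, ← mul_assoc, ← map_mul]
      rw [inv_mul_cancel₀ (by exact_mod_cast hn)]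
      simp
    rw [h] at h2
    simpa using h2.symm
  constructor
  · rintro h ⟨g, hg⟩
    have hfix : τ (X - C g) = X - C g := by
      rw [map_sub, hτX, hτC, hg, map_add]
      ring
    obtain ⟨a, _, hpa⟩ := h (X - C g) hfix
    have h1 := congrArg (fun q : Polynomial A => q.coeff 1) hpa
    simp at h1
  · intro hng
    -- τ acts by applying σ to coefficients and substituting X ↦ X + C β
    have hτ : ∀ p : Polynomial A,
        τ p = (p.map (σ : A →+* A)).comp (X + C β) := by
      have : (τ : Polynomial A →+* Polynomial A) =
          eval₂RingHom (C.comp (σ : A →+* A)) (X + C β) := by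
        apply ringHom_ext
        · intro a; simpa using hτC a
        · simpa using hτX
      intro p
      have := congrArg (fun f : Polynomial A →+* Polynomial A => f p) this
      simpa [comp, eval₂_map] using this
    -- τ commutes with derivative
    have hder : ∀ p : Polynomial A, τ (derivative p) = derivative (τ p) := by
      intro p
      rw [hτ, hτ, derivative_comp, derivative_map]
      simp
    -- key: derivative drops the degree by exactly one
    have hdeg : ∀ (p : Polynomial A) (n : ℕ), p.natDegree = n + 1 →
        (derivative p).natDegree = n := by
      intro p n hn
      have hle : (derivative p).natDegree ≤ n := by
        have := natDegree_derivative_le p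
        omega
      have hcoeff : (derivative p).coeff n = p.coeff (n + 1) * (n + 1) := by
        simpa using coeff_derivative p n
      have hpne : p ≠ 0 := fun h => by simp [h] at hn
      have hlead : p.coeff (n + 1) ≠ 0 := by
        rw [← hn]; exact mt leadingCoeff_eq_zero.mp hpne
      have hne : (derivative p).coeff n ≠ 0 := by
        rw [hcoeff]
        intro h
        exact hlead (hnat (n + 1) _ (Nat.succ_ne_zero n) (by rw [mul_comm]; exact_mod_cast h))
      exact le_antisymm hle (le_natDegree_of_ne_zero hne)
    -- main claim by strong induction on the degree
    have key : ∀ (n : ℕ) (p : Polynomial A), p.natDegree ≤ n → τ p = p →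
        ∃ a : A, σ a = a ∧ p = C a := by
      intro n
      induction n with
      | zero =>
        intro p hd hp
        have hpc : p = C (p.coeff 0) := eq_C_of_natDegree_le_zero hd
        refine ⟨p.coeff 0, ?_, hpc⟩
        have := hp
        rw [hpc, hτC] at this
        exact C_injective this
      | succ n ih =>
        intro p hd hp
        rcases le_or_gt p.natDegree n with h | h
        · exact ih p h hp
        · have hn1 : p.natDegree = n + 1 := le_antisymm hd h
          -- derivative is also fixed by τ
          have hdfix : τ (derivative p) = derivative p := by
            rw [hder, hp]
          have hdd : (derivative p).natDegree = n := hdeg p n hn1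
          obtain ⟨a, ha, hpa⟩ := ih (derivative p) (le_of_eq hdd) hdfix
          -- derivative p = C a forces n = 0
          have hn0 : n = 0 := by
            rw [hpa] at hdd
            simpa using hdd.symm
          subst hn0
          -- p has degree exactly 1
          have h1 : p.natDegree = 1 := hn1
          have hp1 : p = C (p.coeff 1) * X + C (p.coeff 0) :=
            eq_X_add_C_of_natDegree_le_one (le_of_eq h1)
          have ha1 : a = p.coeff 1 := by
            have := congrArg (fun q : Polynomial A => q.coeff 0) hpa
            simpa [coeff_derivative] using this.symm
          subst ha1
          have hane : p.coeff 1 ≠ 0 := by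
            have hpne : p ≠ 0 := fun hh => by simp [hh] at h1
            rw [← h1]; exact mt leadingCoeff_eq_zero.mp hpne
          -- extract the constant-coefficient equation from τ p = p
          have heq : σ (p.coeff 1) * β + σ (p.coeff 0) = p.coeff 0 := by
            have h2 : τ p = C (σ (p.coeff 1)) * (X + C β) + C (σ (p.coeff 0)) := by
              conv_lhs => rw [hp1]
              rw [map_add, map_mul, hτC, hτC, hτX]
            rw [hp] at h2
            have := congrArg (fun q : Polynomial A => q.coeff 0) h2
            simpa [coeff_zero_eq_eval_zero] using this.symm
          -- produce a solution g of σ g = g + β, contradiction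
          obtain ⟨b, hb, hab⟩ := hK (p.coeff 1) ha hane
          exfalso
          apply hng
          refine ⟨-(p.coeff 0 * b), ?_⟩
          have hσc : σ (p.coeff 0) = p.coeff 0 - p.coeff 1 * β := by
            rw [ha] at heq; linear_combination heq
          rw [map_neg, map_mul, hb, hσc]
          linear_combination (β : A) * hab
    intro p hp
    exact key p.natDegree p le_rfl hp
end

section
/- Let (A[t],σ) be a ΣΣ-extension of (A,σ) (i.e., t transcendental, σ(t) − t ∈ A, const(A[t],σ) = const(A,σ) = K a field). If g, f ∈ A[t] satisfy σ(g) − g = f, then deg(g) ≤ max(deg(f), −1) + 1. -/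
/-- In a Σ-extension `A[t]` of `(A, σ)` with `σ(t) = t + β` and constants forming
a field, a solution `g` of the telescoping equation `σ(g) - g = f` satisfies
`deg(g) ≤ max(deg(f), -1) + 1`. -/
theorem sigma_extension_degree_bound {A : Type*} [CommRing A] [Nontrivial A]
    [Algebra ℚ A] (σ : A ≃+* A)
    (hK : ∀ a : A, σ a = a → a ≠ 0 → ∃ b : A, σ b = b ∧ a * b = 1)
    (β : A) (τ : Polynomial A ≃+* Polynomial A)
    (hτC : ∀ a : A, τ (Polynomial.C a) = Polynomial.C (σ a))
    (hτX : τ Polynomial.X = Polynomial.X + Polynomial.C β)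
    (hconst : ∀ p : Polynomial A, τ p = p → ∃ a : A, σ a = a ∧ p = Polynomial.C a)
    (g f : Polynomial A) (h : τ g - g = f) :
    g.degree ≤ max (f.degree + 1) 0 := by
  classical
  open Polynomial in
  by_contra hcon
  push_neg at hcon
  rw [max_lt_iff] at hcon
  obtain ⟨hf1, hg0⟩ := hcon
  have hgne : g ≠ 0 := by
    intro hg
    rw [hg, degree_zero] at hg0
    exact absurd hg0 (by simp)
  set n := g.natDegree with hndef
  have hdeg : g.degree = (n : ℕ) := degree_eq_natDegree hgne
  have hn1 : 1 ≤ n := by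
    rw [hdeg] at hg0
    exact_mod_cast hg0
  -- f has zero coefficients at n and n-1
  have hfn : f.coeff n = 0 := by
    apply Polynomial.coeff_eq_zero_of_degree_lt
    refine lt_of_le_of_lt ?_ (hf1.trans_le hdeg.le)
    exact le_add_of_nonneg_right zero_le_one
  have hfn1 : f.coeff (n - 1) = 0 := by
    apply Polynomial.coeff_eq_zero_of_degree_lt
    have hcast : ((n : ℕ) : WithBot ℕ) = ((n - 1 : ℕ) : WithBot ℕ) + 1 := by
      rw [← Nat.cast_add_one]
      congr 1
      omega
    rw [hdeg, hcast] at hf1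
    exact lt_of_add_lt_add_right (hf1.trans_le (le_refl _))
  -- identify τ with taylor ∘ map σ
  have hτeq : (τ : Polynomial A →+* Polynomial A) =
      Polynomial.eval₂RingHom (Polynomial.C.comp (σ : A →+* A))
        (Polynomial.X + Polynomial.C β) := by
    apply Polynomial.ringHom_ext
    · intro a; simp [hτC a]
    · simpa using hτX
  have hτ : ∀ p : Polynomial A,
      τ p = Polynomial.taylor β (p.map (σ : A →+* A)) := by
    intro p
    have h1 : τ p = Polynomial.eval₂ (Polynomial.C.comp (σ : A →+* A))
        (Polynomial.X + Polynomial.C β) p := by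
      have := RingHom.congr_fun hτeq p
      simpa using this
    rw [h1, Polynomial.taylor_apply, Polynomial.comp, Polynomial.eval₂_map]
  set q := g.map (σ : A →+* A) with hq
  have hqd : q.natDegree ≤ n := Polynomial.natDegree_map_le
  have hqc : ∀ i, q.coeff i = σ (g.coeff i) := fun i => Polynomial.coeff_map _ i
  -- coefficient n of τ g
  have hcn : (τ g).coeff n = σ (g.coeff n) := by
    rw [hτ, Polynomial.taylor_coeff]
    have hd0 : (Polynomial.hasseDeriv n q).natDegree = 0 := by
      have := Polynomial.natDegree_hasseDeriv_le q n
      omega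
    have hC : Polynomial.hasseDeriv n q =
        Polynomial.C ((Polynomial.hasseDeriv n q).coeff 0) :=
      Polynomial.eq_C_of_natDegree_le_zero hd0.le
    rw [hC, Polynomial.eval_C, Polynomial.hasseDeriv_coeff]
    simp [hqc]
  -- coefficient n-1 of τ g
  have hcn1 : (τ g).coeff (n - 1) =
      σ (g.coeff (n - 1)) + (n : A) * σ (g.coeff n) * β := by
    rw [hτ, Polynomial.taylor_coeff]
    have hd1 : (Polynomial.hasseDeriv (n - 1) q).natDegree < 2 := by
      have := Polynomial.natDegree_hasseDeriv_le q (n - 1)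
      omega
    rw [Polynomial.eval_eq_sum_range' hd1]
    rw [Finset.sum_range_succ, Finset.sum_range_one]
    rw [Polynomial.hasseDeriv_coeff, Polynomial.hasseDeriv_coeff]
    have e1 : (0 + (n - 1)).choose (n - 1) = 1 := by simp
    have e2 : (1 + (n - 1)).choose (n - 1) = n := by
      have h1 : 1 + (n - 1) = n := by omega
      rw [h1, Nat.choose_symm hn1, Nat.choose_one_right]
    have e3 : 1 + (n - 1) = n := by omega
    rw [e1, e2, e3, hqc, hqc]
    push_cast
    ring
  -- leading coefficient is fixed by σ
  have hgn : g.coeff n ≠ 0 := Polynomial.coeff_ne_zero_of_eq_degree hdeg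
  have hsn : σ (g.coeff n) = g.coeff n := by
    have := congrArg (fun p => Polynomial.coeff p n) h
    simp only [Polynomial.coeff_sub, hcn, hfn] at this
    linear_combination this
  -- key relation at coefficient n-1
  have hrel : σ (g.coeff (n - 1)) - g.coeff (n - 1) = -((n : A) * g.coeff n * β) := by
    have := congrArg (fun p => Polynomial.coeff p (n - 1)) h
    simp only [Polynomial.coeff_sub, hcn1, hfn1, hsn] at this
    linear_combination this
  -- invert the leading coefficient
  obtain ⟨b, hb1, hb2⟩ := hK (g.coeff n) hsn hgn
  -- σ fixes rationals
  have hσrat : ∀ x : ℚ, σ (algebraMap ℚ A x) = algebraMap ℚ A x := by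
    intro x
    have : (σ : A →+* A).comp (algebraMap ℚ A) = algebraMap ℚ A :=
      Subsingleton.elim _ _
    exact RingHom.congr_fun this x
  set e : A := algebraMap ℚ A ((n : ℚ)⁻¹) with he
  have hen : e * (n : A) = 1 := by
    have hn0 : (n : ℚ) ≠ 0 := Nat.cast_ne_zero.mpr (by omega)
    rw [he, show ((n : A)) = algebraMap ℚ A (n : ℚ) by push_cast; simp,
      ← map_mul, inv_mul_cancel₀ hn0, map_one]
  set γ : A := -(e * (b * g.coeff (n - 1))) with hγ
  have hσγ : σ γ - γ = β := by
    have hσe : σ e = e := hσrat _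
    have : σ γ - γ = -(e * b * (σ (g.coeff (n - 1)) - g.coeff (n - 1))) := by
      simp only [hγ, map_neg, map_mul, hσe, hb1]
      ring
    rw [this, hrel]
    have hbg : b * g.coeff n = 1 := by rw [mul_comm]; exact hb2
    calc -(e * b * -((n : A) * g.coeff n * β))
        = (e * (n : A)) * (b * g.coeff n) * β := by ring
      _ = β := by rw [hen, hbg]; ring
  -- X - C γ is a nonconstant invariant polynomial: contradiction
  have hτp : τ (Polynomial.X - Polynomial.C γ) = Polynomial.X - Polynomial.C γ := by
    rw [map_sub, hτX, hτC]
    have : σ γ = γ + β := by linear_combination hσγ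
    rw [this, Polynomial.C_add]
    ring
  obtain ⟨a, _, ha⟩ := hconst _ hτp
  have := congrArg (fun p => Polynomial.coeff p 1) ha
  simp at this
end

section
/- Let K be a field of characteristic 0 and let a, b ∈ K[k] be nonconstant polynomials in k. Then for r ∈ ℤ, gcd(a(k+r), b(k)) ≠ 1 if and only if r is a root of the resultant p(z) = res_k(a(k+z), b(k)) ∈ K[z]. Consequently, shift-equivalence of a and b (existence of r ∈ ℤ with gcd(a(k+r), b(k)) ≠ 1) is decidable via integer roots of p. -/
/-- The Sylvester matrix of two polynomials `f, g`, with `n` staggered rows of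
coefficients of `f` and `m` staggered rows of coefficients of `g`. -/
def sylvesterMatrix {R : Type*} [CommRing R] (m n : ℕ) (f g : Polynomial R) :
    Matrix (Fin (n + m)) (Fin (n + m)) R :=
  Matrix.of fun i j =>
    if (i : ℕ) < n then
      if (i : ℕ) ≤ (j : ℕ) then f.coeff ((j : ℕ) - (i : ℕ)) else 0
    else
      if (i : ℕ) - n ≤ (j : ℕ) then g.coeff ((j : ℕ) - ((i : ℕ) - n)) else 0

/-- The resultant of two polynomials, as the determinant of their Sylvester matrix. -/
def resultant {R : Type*} [CommRing R] (f g : Polynomial R) : R :=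
  (sylvesterMatrix f.natDegree g.natDegree f g).det

/-!
Specialising `z ↦ r` commutes with forming the Sylvester matrix (the shift `k ↦ k + z` does not
lower the degree of `a`), so `p(r) = res_k(a(k + r), b(k))`; over a field the resultant of two
polynomials, not both zero, vanishes exactly when they are not coprime.
-/

section

open Polynomial

variable {R : Type*} [CommRing R]

theorem ite_le_coeff_sub_eq_ite_mem_Icc {m : ℕ} {f : R[X]} (hf : f.natDegree ≤ m) (i j : ℕ) :
    (if i ≤ j then f.coeff (j - i) else 0) =
      if j ∈ Set.Icc i (i + m) then f.coeff (j - i) else 0 := by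
  by_cases hjm : j ≤ i + m
  · simp [hjm]
  · simp [hjm, coeff_eq_zero_of_natDegree_lt (show f.natDegree < j - i by omega)]

theorem sylvesterMatrix_eq_transpose_sylvester {m n : ℕ} {f g : R[X]}
    (hf : f.natDegree ≤ m) (hg : g.natDegree ≤ n) :
    sylvesterMatrix m n f g = (sylvester g f n m).transpose := by
  ext i j
  induction i using Fin.addCases with
  | left i =>
    simp only [sylvesterMatrix, sylvester, Matrix.of_apply, Matrix.transpose_apply,
      Fin.addCases_left, Fin.val_castAdd, i.isLt, if_true]
    exact ite_le_coeff_sub_eq_ite_mem_Icc hf i j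
  | right i =>
    simp only [sylvesterMatrix, sylvester, Matrix.of_apply, Matrix.transpose_apply,
      Fin.addCases_right, Fin.val_natAdd, Nat.add_sub_cancel_left,
      show ¬ n + (i : ℕ) < n by omega, if_false]
    exact ite_le_coeff_sub_eq_ite_mem_Icc hg i j

theorem resultant_eq_resultant_swap (f g : R[X]) :
    _root_.resultant f g = Polynomial.resultant g f := by
  rw [_root_.resultant, sylvesterMatrix_eq_transpose_sylvester le_rfl le_rfl,
    Matrix.det_transpose]
  rfl

theorem eval_resultant_comp_X_add_C_X (a b : R[X]) (z : R) :
    eval z (_root_.resultant ((a.map C).comp (X + C X)) (b.map C)) =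
      _root_.resultant (a.comp (X + C z)) b := by
  have hC : (evalRingHom z).comp C = RingHom.id R := by ext; simp
  have hb : (b.map C).map (evalRingHom z) = b := by rw [map_map, hC, map_id]
  have ha : ((a.map C).comp (X + C X)).map (evalRingHom z) = a.comp (X + C z) := by
    simp [map_comp, map_map, hC]
  have hdeg : ((a.map C).comp (X + C X)).natDegree = (a.comp (X + C z)).natDegree := by
    rw [← taylor_apply, ← taylor_apply, natDegree_taylor, natDegree_taylor,
      natDegree_map_eq_of_injective C_injective]
  rw [resultant_eq_resultant_swap, resultant_eq_resultant_swap, ← coe_evalRingHom,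
    ← resultant_map_map, hb, ha, natDegree_map_eq_of_injective C_injective, hdeg]

end

theorem shift_equivalence_via_resultant_general {K : Type*} [Field K]
    (a b : Polynomial K) (hb : 0 < b.natDegree) (r : ℤ) :
    ¬ IsCoprime (a.comp (Polynomial.X + Polynomial.C (r : K))) b ↔
      Polynomial.eval ((r : ℤ) : K)
        (resultant
          ((a.map (Polynomial.C : K →+* Polynomial K)).comp
            (Polynomial.X + Polynomial.C Polynomial.X))
          (b.map (Polynomial.C : K →+* Polynomial K))) = 0 := by
  rw [eval_resultant_comp_X_add_C_X, resultant_eq_resultant_swap,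
    Polynomial.resultant_eq_zero_iff, isCoprime_comm]
  exact (and_iff_right (Or.inl (Polynomial.ne_zero_of_natDegree_gt hb))).symm

/-- For nonconstant `a, b ∈ K[k]` over a field of characteristic zero and `r ∈ ℤ`,
the shifted polynomial `a(k+r)` has a nontrivial common factor with `b(k)` if and
only if `r` is a root of the resultant `p(z) = res_k(a(k+z), b(k)) ∈ K[z]`. -/
theorem shift_equivalence_via_resultant {K : Type*} [Field K] [CharZero K]
    (a b : Polynomial K) (ha : 0 < a.natDegree) (hb : 0 < b.natDegree) (r : ℤ) :
    ¬ IsCoprime (a.comp (Polynomial.X + Polynomial.C (r : K))) b ↔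
      Polynomial.eval ((r : ℤ) : K)
        (resultant
          ((a.map (Polynomial.C : K →+* Polynomial K)).comp
            (Polynomial.X + Polynomial.C Polynomial.X))
          (b.map (Polynomial.C : K →+* Polynomial K))) = 0 :=
  shift_equivalence_via_resultant_general a b hb r
end

section
/- For all integers n ≥ 0 and 0 ≤ b ≤ n: Σ_{k=1}^{b} Σ_{i=0}^{k-1} C(n,i) = (1/2)(2b − n) Σ_{i=0}^{b} C(n,i) + (1/2) C(n,b)(n − b). -/
open scoped BigOperators

/-- `Σ_{k=1}^{b} Σ_{i=0}^{k-1} C(n,i)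
      = (1/2)(2b − n) Σ_{i=0}^{b} C(n,i) + (1/2) C(n,b)(n − b)`. -/
theorem sum_partial_binomial_sums (n b : ℕ) (h : b ≤ n) :
    ∑ k ∈ Finset.Icc 1 b, ∑ i ∈ Finset.range k, (n.choose i : ℚ) =
      (1 / 2) * (2 * (b : ℚ) - (n : ℚ)) * ∑ i ∈ Finset.range (b + 1), (n.choose i : ℚ) +
        (1 / 2) * (n.choose b : ℚ) * ((n : ℚ) - (b : ℚ)) := by
  induction b with
  | zero => simp
  | succ b ih =>
    have hb : b ≤ n := by omega
    have key : (n.choose (b + 1) : ℚ) * ((b : ℚ) + 1) =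
        (n.choose b : ℚ) * ((n : ℚ) - (b : ℚ)) := by
      have := Nat.choose_succ_right_eq n b
      have h2 := congrArg (Nat.cast (R := ℚ)) this
      push_cast [Nat.cast_sub hb] at h2
      linarith
    rw [Finset.sum_Icc_succ_top (by omega : 1 ≤ b + 1), ih hb,
      Finset.sum_range_succ _ (b + 1)]
    push_cast
    linear_combination (-1 / 2 : ℚ) * key
end

section
/- For all integers n ≥ 0 and 1 ≤ b ≤ n: Σ_{k=1}^{b} (−1)^k C(n,k)^{−1} Σ_{i=0}^{k−1} C(n,i) = (−1)^b (b+1)/((n+2) C(n,b)) · Σ_{i=0}^{b} C(n,i) + (−1)^b (−2b−3)/(4(n+2)) − 1/(4(n+2)). -/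
open scoped BigOperators

/-- `Σ_{k=1}^{b} (−1)^k C(n,k)^{−1} Σ_{i=0}^{k−1} C(n,i)
      = (−1)^b (b+1)/((n+2) C(n,b)) Σ_{i=0}^{b} C(n,i)
        + (−1)^b (−2b−3)/(4(n+2)) − 1/(4(n+2))`. -/
theorem alternating_inverse_binomial_sum (n b : ℕ) (h1 : 1 ≤ b) (h2 : b ≤ n) :
    ∑ k ∈ Finset.Icc 1 b,
        (-1 : ℚ) ^ k * (n.choose k : ℚ)⁻¹ * ∑ i ∈ Finset.range k, (n.choose i : ℚ) =
      (-1 : ℚ) ^ b * ((b : ℚ) + 1) / (((n : ℚ) + 2) * (n.choose b : ℚ)) *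
          ∑ i ∈ Finset.range (b + 1), (n.choose i : ℚ) +
        (-1 : ℚ) ^ b * (-2 * (b : ℚ) - 3) / (4 * ((n : ℚ) + 2)) -
          1 / (4 * ((n : ℚ) + 2)) := by
  induction b, h1 using Nat.le_induction with
  | base =>
    have hn : (1:ℕ) ≤ n := h2
    have hn0 : (n:ℚ) ≠ 0 := by
      have : n ≠ 0 := by omega
      exact_mod_cast this
    simp [Finset.sum_range_succ, Nat.choose_one_right]
    have hn2 : (n:ℚ) + 2 ≠ 0 := by positivity
    field_simp
    ring
  | succ b hb ih =>
    have hbn : b ≤ n := le_of_lt h2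
    have hlt : b < n := h2
    have hc0 : (n.choose b : ℚ) ≠ 0 := by
      exact_mod_cast (Nat.choose_pos hbn).ne'
    have hkey : (n.choose (b+1) : ℚ) * (b+1) = (n.choose b : ℚ) * ((n:ℚ) - b) := by
      have := Nat.choose_succ_right_eq n b
      have h' : ((n.choose (b+1) * (b+1) : ℕ) : ℚ) = ((n.choose b * (n - b) : ℕ) : ℚ) := by
        exact_mod_cast congrArg (Nat.cast (R := ℚ)) this
      push_cast [Nat.cast_sub hbn] at h'
      exact_mod_cast h'
    have hnb : (n:ℚ) - b ≠ 0 := by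
      have : (b:ℚ) < n := by exact_mod_cast hlt
      linarith
    have hb1 : ((b:ℚ) + 1) ≠ 0 := by positivity
    have hc1 : (n.choose (b+1) : ℚ) = (n.choose b : ℚ) * ((n:ℚ) - b) / ((b:ℚ)+1) := by
      field_simp
      linarith [hkey]
    rw [Finset.sum_Icc_succ_top (by omega : 1 ≤ b + 1), ih hbn,
      Finset.sum_range_succ (fun i => (n.choose i : ℚ)) (b+1)]
    have hn2 : (n:ℚ) + 2 ≠ 0 := by positivity
    rw [hc1]
    push_cast
    field_simp
    ring
end

section
/- For all integers n ≥ 0: Σ_{k=0}^{n} C(n,k) Σ_{i=1}^{k} (−1)^i/i = −2^n Σ_{k=1}^{n} 1/(2^k · k). -/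
open scoped BigOperators
open Finset

private noncomputable def aH (k : ℕ) : ℚ := ∑ i ∈ Finset.Icc 1 k, (-1 : ℚ) ^ i / (i : ℚ)

private noncomputable def SH (n : ℕ) : ℚ := ∑ k ∈ Finset.range (n + 1), (n.choose k : ℚ) * aH k

private lemma aH_succ (k : ℕ) : aH (k + 1) = aH k + (-1 : ℚ) ^ (k + 1) / (k + 1) := by
  unfold aH
  rw [Finset.sum_Icc_succ_top (by omega)]
  push_cast
  ring

private lemma alt_sum (n : ℕ) :
    ∑ k ∈ Finset.range (n + 1), (-1 : ℚ) ^ k * ((n + 1).choose (k + 1) : ℚ) = 1 := by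
  have h0 : ∑ k ∈ Finset.range (n + 2), (-1 : ℚ) ^ k * ((n + 1).choose k : ℚ) = 0 := by
    have := Int.alternating_sum_range_choose (n := n + 1)
    simp only [Nat.succ_ne_zero, if_false] at this
    exact_mod_cast this
  rw [Finset.sum_range_succ'] at h0
  simp only [pow_zero, Nat.choose_zero_right, Nat.cast_one, one_mul] at h0
  have : ∑ k ∈ Finset.range (n + 1), (-1 : ℚ) ^ (k + 1) * ((n + 1).choose (k + 1) : ℚ) = -1 := by
    linarith
  calc ∑ k ∈ Finset.range (n + 1), (-1 : ℚ) ^ k * ((n + 1).choose (k + 1) : ℚ)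
      = -∑ k ∈ Finset.range (n + 1), (-1 : ℚ) ^ (k + 1) * ((n + 1).choose (k + 1) : ℚ) := by
        rw [← Finset.sum_neg_distrib]; apply Finset.sum_congr rfl; intro k _; ring
    _ = 1 := by rw [this]; ring

private lemma L1 (n : ℕ) :
    ∑ k ∈ Finset.range (n + 1), ((n.choose k : ℚ)) * ((-1 : ℚ) ^ (k + 1) / (k + 1)) =
      -(1 / (n + 1)) := by
  have key : ∀ k ∈ Finset.range (n + 1),
      ((n.choose k : ℚ)) * ((-1 : ℚ) ^ (k + 1) / (k + 1)) =
      -((-1 : ℚ) ^ k * ((n + 1).choose (k + 1) : ℚ)) / (n + 1) := by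
    intro k _
    have h : ((n + 1 : ℕ) : ℚ) * (n.choose k : ℚ) = ((n + 1).choose (k + 1) : ℚ) * ((k + 1 : ℕ) : ℚ) := by
      exact_mod_cast congrArg (Nat.cast : ℕ → ℚ) (Nat.add_one_mul_choose_eq n k)
    push_cast at h
    have hk : ((k : ℚ) + 1) ≠ 0 := by positivity
    have hn : ((n : ℚ) + 1) ≠ 0 := by positivity
    have h' : (n.choose k : ℚ) / ((k : ℚ) + 1) = (((n + 1).choose (k + 1) : ℚ)) / ((n : ℚ) + 1) := by
      field_simp
      linear_combination h
    calc ((n.choose k : ℚ)) * ((-1 : ℚ) ^ (k + 1) / (k + 1))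
        = (-1 : ℚ) ^ (k + 1) * ((n.choose k : ℚ) / ((k : ℚ) + 1)) := by ring
      _ = (-1 : ℚ) ^ (k + 1) * ((((n + 1).choose (k + 1) : ℚ)) / ((n : ℚ) + 1)) := by rw [h']
      _ = -((-1 : ℚ) ^ k * ((n + 1).choose (k + 1) : ℚ)) / (n + 1) := by
          rw [pow_succ]; ring
  rw [Finset.sum_congr rfl key]
  rw [← Finset.sum_div, Finset.sum_neg_distrib, alt_sum]
  ring

private lemma SH_succ (n : ℕ) : SH (n + 1) = 2 * SH n - 1 / (n + 1) := by
  have ha0 : aH 0 = 0 := by simp [aH]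
  have h1 : SH (n + 1) = ∑ k ∈ Finset.range (n + 1), ((n + 1).choose (k + 1) : ℚ) * aH (k + 1) := by
    unfold SH
    rw [Finset.sum_range_succ']
    simp [ha0]
  have h2 : ∀ k ∈ Finset.range (n + 1),
      ((n + 1).choose (k + 1) : ℚ) * aH (k + 1) =
      (n.choose k : ℚ) * aH k + (n.choose k : ℚ) * ((-1 : ℚ) ^ (k + 1) / (k + 1))
        + (n.choose (k + 1) : ℚ) * aH (k + 1) := by
    intro k _
    rw [Nat.choose_succ_succ' n k]
    push_cast
    rw [aH_succ]
    ring
  rw [h1, Finset.sum_congr rfl h2, Finset.sum_add_distrib, Finset.sum_add_distrib]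
  have h3 : ∑ k ∈ Finset.range (n + 1), (n.choose (k + 1) : ℚ) * aH (k + 1) = SH n := by
    have : ∑ k ∈ Finset.range (n + 2), (n.choose k : ℚ) * aH k
        = ∑ k ∈ Finset.range (n + 1), (n.choose (k + 1) : ℚ) * aH (k + 1) + (n.choose 0 : ℚ) * aH 0 := by
      rw [Finset.sum_range_succ']
    have h4 : ∑ k ∈ Finset.range (n + 2), (n.choose k : ℚ) * aH k = SH n := by
      unfold SH
      rw [Finset.sum_range_succ]
      simp [Nat.choose_succ_self]
    rw [h4] at this
    simp [ha0] at this
    linarith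
  rw [h3, L1 n]
  unfold SH
  ring

/-- `Σ_{k=0}^{n} C(n,k) Σ_{i=1}^{k} (−1)^i/i = −2^n Σ_{k=1}^{n} 1/(2^k k)`. -/
theorem binomial_alternating_harmonic_sum (n : ℕ) :
    ∑ k ∈ Finset.range (n + 1),
        (n.choose k : ℚ) * ∑ i ∈ Finset.Icc 1 k, (-1 : ℚ) ^ i / (i : ℚ) =
      -(2 : ℚ) ^ n * ∑ k ∈ Finset.Icc 1 n, 1 / ((2 : ℚ) ^ k * (k : ℚ)) := by
  have key : ∀ n : ℕ, SH n = -(2 : ℚ) ^ n * ∑ k ∈ Finset.Icc 1 n, 1 / ((2 : ℚ) ^ k * (k : ℚ)) := by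
    intro n
    induction n with
    | zero => simp [SH, aH]
    | succ m ih =>
      rw [SH_succ, ih, Finset.sum_Icc_succ_top (by omega)]
      have hm : ((m : ℚ) + 1) ≠ 0 := by positivity
      push_cast
      field_simp
      ring
  exact key n
end

section
/- Let (F[x],σ) be a difference ring where F is a field, x satisfies x^λ = 1 with 1, x, …, x^{λ−1} linearly independent over F, σ(x) = α·x for a primitive λ-th root of unity α ∈ const(F,σ), and K = const(F[x],σ) = const(F,σ) is a field. Then for f₁,…,f_d ∈ F[x], the equation σ(g) − g = c₁f₁ + ⋯ + c_d f_d with (c₁,…,c_d) ∈ K^d is equivalent, via coefficient comparison in the basis 1,x,…,x^{λ−1}, to the system of λ equations σ(g_i)·α^i − g_i = c₁ f_{1,i} + ⋯ + c_d f_{d,i} (0 ≤ i < λ), where g = Σ g_i x^i and f_j = Σ f_{j,i} x^i. -/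
/-! Since `τ (a * x ^ i) = σ a * α ^ i * x ^ i`, both sides of the telescoping equation expand
in the basis `x ^ i` with coefficients `σ (g i) * α ^ i - g i` and `∑ j, c j * f j i`, and two
expansions agree exactly when their coefficients do. -/

section CoefficientComparison

variable {F E ι : Type*} [CommSemiring F] [CommSemiring E] [Algebra F E]

theorem map_sum_algebraMap_mul_pow {T : Type*} [FunLike T E E] [RingHomClass T E E]
    (σ : F → F) (τ : T)
    (hτa : ∀ a : F, τ (algebraMap F E a) = algebraMap F E (σ a))
    {α : F} {x : E} (hτx : τ x = algebraMap F E α * x) (s : Finset ι) (g : ι → F) (n : ι → ℕ) :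
    τ (∑ i ∈ s, algebraMap F E (g i) * x ^ n i) =
      ∑ i ∈ s, algebraMap F E (σ (g i) * α ^ n i) * x ^ n i := by
  simp only [map_sum, map_mul, map_pow, hτa, hτx, mul_pow]
  exact Finset.sum_congr rfl fun i _ => by ring

theorem sum_algebraMap_mul_sum_algebraMap_mul (s : Finset ι) {κ : Type*} (t : Finset κ)
    (c : κ → F) (f : κ → ι → F) (y : ι → E) :
    ∑ j ∈ t, algebraMap F E (c j) * ∑ i ∈ s, algebraMap F E (f j i) * y i =
      ∑ i ∈ s, algebraMap F E (∑ j ∈ t, c j * f j i) * y i := by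
  simp only [Finset.mul_sum, map_sum, map_mul, Finset.sum_mul]
  rw [Finset.sum_comm]
  exact Finset.sum_congr rfl fun i _ => Finset.sum_congr rfl fun j _ => by ring

theorem Module.Basis.sum_algebraMap_mul_eq_iff [Fintype ι] (b : Module.Basis ι F E)
    (v w : ι → F) :
    ∑ i, algebraMap F E (v i) * b i = ∑ i, algebraMap F E (w i) * b i ↔ ∀ i, v i = w i := by
  simp only [← Algebra.smul_def, ← Module.Basis.equivFun_symm_apply]
  rw [b.equivFun.symm.injective.eq_iff, funext_iff]

end CoefficientComparison

theorem telescoping_coefficient_comparison_general {F E : Type*} [Field F] [CommRing E]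
    [Algebra F E] (σ : F ≃+* F) (lam : ℕ)
    (α : F)
    (x : E)
    (bas : Module.Basis (Fin lam) F E) (hbas : ∀ i : Fin lam, bas i = x ^ (i : ℕ))
    (τ : E ≃+* E) (hτa : ∀ a : F, τ (algebraMap F E a) = algebraMap F E (σ a))
    (hτx : τ x = algebraMap F E α * x)
    (d : ℕ) (f : Fin d → Fin lam → F) (c : Fin d → F)
    (g : Fin lam → F) :
    τ (∑ i : Fin lam, algebraMap F E (g i) * x ^ (i : ℕ)) -
        ∑ i : Fin lam, algebraMap F E (g i) * x ^ (i : ℕ) =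
      ∑ j : Fin d, algebraMap F E (c j) *
        ∑ i : Fin lam, algebraMap F E (f j i) * x ^ (i : ℕ) ↔
    ∀ i : Fin lam, σ (g i) * α ^ (i : ℕ) - g i = ∑ j : Fin d, c j * f j i := by
  rw [map_sum_algebraMap_mul_pow σ τ hτa hτx, ← Finset.sum_sub_distrib,
    sum_algebraMap_mul_sum_algebraMap_mul]
  simp only [← sub_mul, ← map_sub, ← hbas]
  exact bas.sum_algebraMap_mul_eq_iff _ _

/-- In a root-of-unity extension `F[x]` (free over `F` with basis `1, x, …, x^{λ-1}`,
`x^λ = 1`, `σ(x) = α·x`) whose constants equal the constants of `F`, the parameterized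
telescoping equation `σ(g) − g = Σ_j c_j f_j` is equivalent, by coefficient comparison,
to the system `σ(g_i)·α^i − g_i = Σ_j c_j f_{j,i}` for `0 ≤ i < λ`. -/
theorem telescoping_coefficient_comparison {F E : Type*} [Field F] [CommRing E]
    [Algebra F E] (σ : F ≃+* F) (lam : ℕ) (hlam : 1 < lam)
    (α : F) (hαconst : σ α = α) (hα : α ^ lam = 1)
    (hαmin : ∀ m : ℕ, 0 < m → m < lam → α ^ m ≠ 1)
    (x : E) (hx : x ^ lam = 1)
    (bas : Module.Basis (Fin lam) F E) (hbas : ∀ i : Fin lam, bas i = x ^ (i : ℕ))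
    (τ : E ≃+* E) (hτa : ∀ a : F, τ (algebraMap F E a) = algebraMap F E (σ a))
    (hτx : τ x = algebraMap F E α * x)
    (hconst : ∀ e : E, τ e = e → ∃ c : F, σ c = c ∧ e = algebraMap F E c)
    (d : ℕ) (f : Fin d → Fin lam → F) (c : Fin d → F) (hc : ∀ j, σ (c j) = c j)
    (g : Fin lam → F) :
    τ (∑ i : Fin lam, algebraMap F E (g i) * x ^ (i : ℕ)) -
        ∑ i : Fin lam, algebraMap F E (g i) * x ^ (i : ℕ) =
      ∑ j : Fin d, algebraMap F E (c j) *
        ∑ i : Fin lam, algebraMap F E (f j i) * x ^ (i : ℕ) ↔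
    ∀ i : Fin lam, σ (g i) * α ^ (i : ℕ) - g i = ∑ j : Fin d, c j * f j i :=
  telescoping_coefficient_comparison_general σ lam α x bas hbas τ hτa hτx d f c g
end
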